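/- Gegenbauer coefficients of the stereographic kernel (even order): for integers k ≥ 0 and q ≥ 3, the coefficient b_{2k,q} := c_{2k,q}^{−1} ∫_{−1}^{1} cot(arccos(x)/2) C_{2k}^{(q−1)/2}(x)(1−x²)^{q/2−1} dx equals α_{k,q}(4k+q−1), where α_{k,q} = Γ(k+1/2)² Γ((q−1)/2)² / (2π Γ(k+q/2)²) and c_{k,q} = (ω_q/ω_{q−1})(1+2k/(q−1))^{−1} C_k^{(q−1)/2}(1). -/

import Mathlib

/-- Surface area of the unit sphere `S^q`. -/
noncomputable def sphereArea (q : ℝ) : ℝ :=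
  2 * Real.pi ^ ((q + 1) / 2) / Real.Gamma ((q + 1) / 2)

/-- Gegenbauer (ultraspherical) polynomials `C_n^{lam}` via the standard recurrence. -/
noncomputable def gegenbauer (lam : ℝ) : ℕ → ℝ → ℝ
  | 0 => fun _ => 1
  | 1 => fun x => 2 * lam * x
  | (n + 2) => fun x =>
      (2 * ((n : ℝ) + 1 + lam) * x * gegenbauer lam (n + 1) x
        - ((n : ℝ) + 2 * lam) * gegenbauer lam n x) / ((n : ℝ) + 2)

/-!
Write `λ = (q - 1)/2` and `w(x) = (1 - x²)^(λ - 1)`, so that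
`(1 - x²)^(q/2 - 1) = √(1 - x²) w(x)`. Since `cot (arccos x / 2) · √(1 - x²) = 1 + x`, the
integrand is `(1 + x) C_{2k}^λ(x) w(x)`, and its odd part `x C_{2k}^λ w` integrates to zero.
For `I_n = ∫ C_n^λ w`, integrating the derivative of `(1 - x²)^λ C_{n+1}^λ` over `[-1, 1]` and
using the three-term recurrence gives `(n + 2λ + 1)(n + 2) I_{n+2} = (n + 1)(n + 2λ) I_n`.
Together with the beta integral `I_0 = √π Γ(λ) / Γ(λ + 1/2)` this determines `I_{2k}`, and the
factor `C_{2k}^λ(1)` cancels against the normalisation.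
-/

open Polynomial Real Set

section Gegenbauer

variable (lam : ℝ)

theorem mul_gegenbauer_add_two (n : ℕ) (x : ℝ) :
    ((n : ℝ) + 2) * gegenbauer lam (n + 2) x =
      2 * ((n : ℝ) + 1 + lam) * x * gegenbauer lam (n + 1) x
        - ((n : ℝ) + 2 * lam) * gegenbauer lam n x := by
  rw [gegenbauer, mul_div_cancel₀ _ (by positivity)]

theorem gegenbauer_neg (n : ℕ) (x : ℝ) :
    gegenbauer lam n (-x) = (-1) ^ n * gegenbauer lam n x := by
  induction n using Nat.twoStepInduction with
  | zero => simp [gegenbauer]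
  | one => simp [gegenbauer]
  | more n ih₁ ih₂ =>
    simp only [gegenbauer, ih₁, ih₂]
    ring

theorem mul_gegenbauer_succ_one (n : ℕ) :
    ((n : ℝ) + 1) * gegenbauer lam (n + 1) 1 = ((n : ℝ) + 2 * lam) * gegenbauer lam n 1 := by
  induction n with
  | zero => simp [gegenbauer]
  | succ n ih =>
    push_cast
    linear_combination mul_gegenbauer_add_two lam n 1 + ih

theorem gegenbauer_one_pos {lam : ℝ} (hlam : 0 < lam) (n : ℕ) : 0 < gegenbauer lam n 1 := by
  induction n with
  | zero => simp [gegenbauer]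
  | succ n ih =>
    have h : 0 < ((n : ℝ) + 1) * gegenbauer lam (n + 1) 1 := by
      rw [mul_gegenbauer_succ_one]
      positivity
    exact pos_of_mul_pos_right h (by positivity)

noncomputable def gegenbauerPoly : ℕ → ℝ[X]
  | 0 => 1
  | 1 => C (2 * lam) * X
  | (n + 2) => C ((n + 2 : ℝ)⁻¹) * (C (2 * ((n : ℝ) + 1 + lam)) * X * gegenbauerPoly (n + 1)
      - C ((n : ℝ) + 2 * lam) * gegenbauerPoly n)

theorem eval_gegenbauerPoly (n : ℕ) (x : ℝ) :
    (gegenbauerPoly lam n).eval x = gegenbauer lam n x := by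
  induction n using Nat.twoStepInduction with
  | zero => simp [gegenbauerPoly, gegenbauer]
  | one => simp [gegenbauerPoly, gegenbauer]
  | more n ih₁ ih₂ =>
    simp only [gegenbauerPoly, gegenbauer, eval_mul, eval_sub, eval_C, eval_X, ih₁, ih₂]
    ring

@[fun_prop]
theorem continuous_gegenbauer (n : ℕ) : Continuous (gegenbauer lam n) :=
  (gegenbauerPoly lam n).continuous.congr (eval_gegenbauerPoly lam n)

theorem one_sub_sq_mul_eval_derivative_gegenbauerPoly (n : ℕ) (x : ℝ) :
    (1 - x ^ 2) * (derivative (gegenbauerPoly lam (n + 1))).eval x =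
      ((n : ℝ) + 2 * lam) * gegenbauer lam n x
        - ((n : ℝ) + 1) * x * gegenbauer lam (n + 1) x := by
  induction n using Nat.twoStepInduction with
  | zero => simp [gegenbauerPoly, gegenbauer]; ring
  | one => simp [gegenbauerPoly, gegenbauer]; ring
  | more n ih₁ ih₂ =>
    have h₂ := mul_gegenbauer_add_two lam n x
    have h₃ := mul_gegenbauer_add_two lam (n + 1) x
    rw [show n + 2 + 1 = (n + 1) + 2 from rfl, gegenbauerPoly]
    simp only [derivative_mul, derivative_sub, derivative_C, derivative_X, eval_mul, eval_sub,
      eval_add, eval_C, eval_X, zero_mul, zero_add, mul_one, eval_gegenbauerPoly]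
    push_cast at ih₂ h₃ ⊢
    field_simp
    linear_combination 2 * ((n : ℝ) + 2 + lam) * x * ih₂ - ((n : ℝ) + 1 + 2 * lam) * ih₁
      + ((n : ℝ) + 3) * x * h₃ - ((n : ℝ) + 1 + 2 * lam) * h₂

end Gegenbauer

theorem cot_mul_sin_two_mul {φ : ℝ} (h : sin φ ≠ 0) :
    cot φ * sin (2 * φ) = 1 + cos (2 * φ) := by
  rw [cot_eq_cos_div_sin, sin_two_mul, cos_two_mul]
  field_simp
  ring

theorem cot_arccos_half_mul_rpow (s : ℝ) {x : ℝ} (hx : x ∈ Ioo (-1 : ℝ) 1) :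
    cot (arccos x / 2) * (1 - x ^ 2) ^ (s - 1 / 2) = (1 + x) * (1 - x ^ 2) ^ (s - 1) := by
  have hsq : 0 < 1 - x ^ 2 := by nlinarith [hx.1, hx.2]
  have hsin : sin (arccos x / 2) ≠ 0 :=
    (sin_pos_of_pos_of_lt_pi (by linarith [arccos_pos.2 hx.2])
      (by linarith [arccos_le_pi x, pi_pos])).ne'
  have hcot : cot (arccos x / 2) * √(1 - x ^ 2) = 1 + x := by
    simpa [mul_div_cancel₀, sin_arccos, cos_arccos hx.1.le hx.2.le]
      using cot_mul_sin_two_mul hsin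
  rw [show s - 1 / 2 = (s - 1) + 1 / 2 by ring, rpow_add hsq, ← sqrt_eq_rpow, ← hcot]
  ring

theorem integral_rpow_mul_one_sub_rpow {a b : ℝ} (ha : 0 < a) (hb : 0 < b) :
    ∫ u in (0 : ℝ)..1, u ^ (a - 1) * (1 - u) ^ (b - 1) = Gamma a * Gamma b / Gamma (a + b) := by
  have h : ((∫ u in (0 : ℝ)..1, u ^ (a - 1) * (1 - u) ^ (b - 1) : ℝ) : ℂ) =
      Complex.betaIntegral a b := by
    rw [← intervalIntegral.integral_ofReal, Complex.betaIntegral]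
    refine intervalIntegral.integral_congr fun u hu => ?_
    rw [uIcc_of_le zero_le_one] at hu
    simp only [Complex.ofReal_mul, Complex.ofReal_cpow hu.1,
      Complex.ofReal_cpow (sub_nonneg.2 hu.2)]
    push_cast
    ring_nf
  rw [Complex.betaIntegral_eq_Gamma_mul_div _ _ (by simpa) (by simpa), ← Complex.ofReal_add,
    Complex.Gamma_ofReal, Complex.Gamma_ofReal, Complex.Gamma_ofReal] at h
  exact_mod_cast h

theorem integral_one_sub_sq_rpow {s : ℝ} (hs : 0 < s) :
    ∫ x in (-1 : ℝ)..1, (1 - x ^ 2) ^ (s - 1) = √π * Gamma s / Gamma (s + 1 / 2) := by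
  have hsub := intervalIntegral.integral_comp_mul_sub (a := 0) (b := 1)
    (fun x : ℝ => (1 - x ^ 2) ^ (s - 1)) two_ne_zero 1
  norm_num at hsub
  have hbeta : ∫ u in (0 : ℝ)..1, (1 - (2 * u - 1) ^ 2) ^ (s - 1) =
      4 ^ (s - 1) * (Gamma s * Gamma s / Gamma (s + s)) := by
    rw [← integral_rpow_mul_one_sub_rpow hs hs, ← intervalIntegral.integral_const_mul]
    refine intervalIntegral.integral_congr fun u hu => ?_
    rw [uIcc_of_le zero_le_one] at hu
    rw [show 1 - (2 * u - 1) ^ 2 = 4 * (u * (1 - u)) by ring,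
      mul_rpow (by norm_num) (mul_nonneg hu.1 (sub_nonneg.2 hu.2)),
      mul_rpow hu.1 (sub_nonneg.2 hu.2)]
  have hpow : (4 : ℝ) ^ (s - 1) * 2 ^ (1 - 2 * s) = 1 / 2 := by
    rw [show (4 : ℝ) = 2 ^ (2 : ℝ) by norm_num, ← rpow_mul zero_le_two,
      ← rpow_add zero_lt_two, show 2 * (s - 1) + (1 - 2 * s) = -1 by ring, rpow_neg_one]
    norm_num
  have hdup := Gamma_mul_Gamma_add_half s
  have hΓ₁ := (Gamma_pos_of_pos hs).ne'
  have hΓ₂ := (Gamma_pos_of_pos (by linarith : 0 < s + 1 / 2)).ne'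
  have hΓ₃ := (Gamma_pos_of_pos (by linarith : 0 < s + s)).ne'
  rw [← two_mul] at hΓ₃ hbeta
  rw [eq_div_iff hΓ₂]
  field_simp at hsub hbeta
  refine mul_left_cancel₀ hΓ₁ ?_
  linear_combination (∫ x in (-1 : ℝ)..1, (1 - x ^ 2) ^ (s - 1)) * hdup
    - Gamma (2 * s) * 2 ^ (1 - 2 * s) * √π * hsub + 2 * 2 ^ (1 - 2 * s) * √π * hbeta
    + 2 * Gamma s ^ 2 * √π * hpow

theorem integral_eq_zero_of_odd {f : ℝ → ℝ} (hf : ∀ x, f (-x) = -f x) (a : ℝ) :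
    ∫ x in -a..a, f x = 0 := by
  have h := intervalIntegral.integral_comp_neg (a := -a) (b := a) f
  simp only [hf, intervalIntegral.integral_neg, neg_neg] at h
  linarith

theorem continuous_one_sub_sq_rpow {s : ℝ} (hs : 0 ≤ s) :
    Continuous fun x : ℝ => (1 - x ^ 2) ^ s :=
  (continuous_const.sub (continuous_pow 2)).rpow_const fun _ => Or.inr hs

theorem intervalIntegrable_mul_one_sub_sq_rpow {f : ℝ → ℝ} (hf : Continuous f) {s : ℝ}
    (hs : 0 ≤ s) (a b : ℝ) :
    IntervalIntegrable (fun x => f x * (1 - x ^ 2) ^ s) MeasureTheory.volume a b :=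
  (hf.mul (continuous_one_sub_sq_rpow hs)).intervalIntegrable a b

noncomputable def gegenbauerIntegral (lam : ℝ) (n : ℕ) : ℝ :=
  ∫ x in (-1 : ℝ)..1, gegenbauer lam n x * (1 - x ^ 2) ^ (lam - 1)

section GegenbauerIntegral

variable {lam : ℝ} (hlam : 1 ≤ lam)
include hlam

theorem hasDerivAt_one_sub_sq_rpow_mul_gegenbauer (n : ℕ) {x : ℝ}
    (hx : x ∈ Icc (-1 : ℝ) 1) :
    HasDerivAt (fun x => (1 - x ^ 2) ^ lam * gegenbauer lam (n + 1) x)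
      ((((n : ℝ) + 2 * lam) * gegenbauer lam n x
          - ((n : ℝ) + 1 + 2 * lam) * x * gegenbauer lam (n + 1) x)
        * (1 - x ^ 2) ^ (lam - 1)) x := by
  have hsq : 0 ≤ 1 - x ^ 2 := by nlinarith [hx.1, hx.2]
  have hw : HasDerivAt (fun x : ℝ => (1 - x ^ 2) ^ lam)
      (-(2 * x) * lam * (1 - x ^ 2) ^ (lam - 1)) x := by
    simpa using ((hasDerivAt_pow 2 x).const_sub 1).rpow_const (Or.inr hlam)
  have hC : HasDerivAt (gegenbauer lam (n + 1))
      ((derivative (gegenbauerPoly lam (n + 1))).eval x) x := by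
    simpa only [eval_gegenbauerPoly] using (gegenbauerPoly lam (n + 1)).hasDerivAt x
  refine (hw.mul hC).congr_deriv ?_
  rw [show (1 - x ^ 2) ^ lam = (1 - x ^ 2) * (1 - x ^ 2) ^ (lam - 1) by
    rw [← rpow_one_add' hsq (by linarith)]; ring_nf]
  linear_combination (1 - x ^ 2) ^ (lam - 1) *
    one_sub_sq_mul_eval_derivative_gegenbauerPoly lam n x

theorem mul_gegenbauerIntegral_eq_mul_integral_mul_gegenbauer_succ (n : ℕ) :
    ((n : ℝ) + 2 * lam) * gegenbauerIntegral lam n =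
      ((n : ℝ) + 1 + 2 * lam) *
        ∫ x in (-1 : ℝ)..1, x * gegenbauer lam (n + 1) x * (1 - x ^ 2) ^ (lam - 1) := by
  have hw : 0 ≤ lam - 1 := by linarith
  have hF : ∫ x in (-1 : ℝ)..1, (((n : ℝ) + 2 * lam) * gegenbauer lam n x
      - ((n : ℝ) + 1 + 2 * lam) * x * gegenbauer lam (n + 1) x)
        * (1 - x ^ 2) ^ (lam - 1) = 0 := by
    rw [intervalIntegral.integral_eq_sub_of_hasDerivAt
      (fun x hx => hasDerivAt_one_sub_sq_rpow_mul_gegenbauer hlam n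
        (by rwa [uIcc_of_le (by norm_num)] at hx))
      (intervalIntegrable_mul_one_sub_sq_rpow (by fun_prop) hw _ _)]
    simp [zero_rpow (by linarith : lam ≠ 0)]
  rw [gegenbauerIntegral, ← sub_eq_zero, ← intervalIntegral.integral_const_mul,
    ← intervalIntegral.integral_const_mul, ← intervalIntegral.integral_sub, ← hF]
  · congr 1; ext x; ring
  all_goals exact (intervalIntegrable_mul_one_sub_sq_rpow (by fun_prop) hw _ _).const_mul _

theorem mul_gegenbauerIntegral_add_two (n : ℕ) :
    ((n : ℝ) + 2) * gegenbauerIntegral lam (n + 2) =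
      2 * ((n : ℝ) + 1 + lam) *
          (∫ x in (-1 : ℝ)..1, x * gegenbauer lam (n + 1) x * (1 - x ^ 2) ^ (lam - 1))
        - ((n : ℝ) + 2 * lam) * gegenbauerIntegral lam n := by
  have hw : 0 ≤ lam - 1 := by linarith
  rw [gegenbauerIntegral, gegenbauerIntegral, ← intervalIntegral.integral_const_mul,
    ← intervalIntegral.integral_const_mul, ← intervalIntegral.integral_const_mul,
    ← intervalIntegral.integral_sub]
  · congr 1; ext x
    linear_combination (1 - x ^ 2) ^ (lam - 1) * mul_gegenbauer_add_two lam n x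
  all_goals exact (intervalIntegrable_mul_one_sub_sq_rpow (by fun_prop) hw _ _).const_mul _

theorem gegenbauerIntegral_add_two (n : ℕ) :
    ((n : ℝ) + 1 + 2 * lam) * ((n : ℝ) + 2) * gegenbauerIntegral lam (n + 2) =
      ((n : ℝ) + 1) * ((n : ℝ) + 2 * lam) * gegenbauerIntegral lam n := by
  linear_combination ((n : ℝ) + 1 + 2 * lam) * mul_gegenbauerIntegral_add_two hlam n
    - 2 * ((n : ℝ) + 1 + lam) * mul_gegenbauerIntegral_eq_mul_integral_mul_gegenbauer_succ hlam n

theorem gegenbauerIntegral_two_mul (k : ℕ) :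
    gegenbauerIntegral lam (2 * k) =
      gegenbauer lam (2 * k) 1 * (Gamma lam * Gamma (lam + 1 / 2) / √π)
        * (Gamma (k + 1 / 2) / Gamma (k + lam + 1 / 2)) ^ 2 := by
  have hΓ₁ := (Gamma_pos_of_pos (by linarith : 0 < lam)).ne'
  induction k with
  | zero =>
    have hΓ₂ := (Gamma_pos_of_pos (by linarith : 0 < lam + 1 / 2)).ne'
    simp only [gegenbauerIntegral, gegenbauer, one_mul, CharP.cast_eq_zero, zero_add,
      Gamma_one_half_eq, integral_one_sub_sq_rpow (by linarith : 0 < lam)]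
    field_simp
  | succ k ih =>
    have hC : ((2 * k : ℝ) + 2) * (2 * k + 1) * gegenbauer lam (2 * k + 2) 1 =
        (2 * k + 1 + 2 * lam) * (2 * k + 2 * lam) * gegenbauer lam (2 * k) 1 := by
      have h₁ := mul_gegenbauer_succ_one lam (2 * k)
      have h₂ := mul_gegenbauer_succ_one lam (2 * k + 1)
      push_cast at h₁ h₂
      linear_combination (2 * k + 1 : ℝ) * h₂ + (2 * k + 1 + 2 * lam) * h₁
    have hΓ₂ : Gamma (k + 1 + 1 / 2) = (k + 1 / 2) * Gamma (k + 1 / 2) := by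
      rw [show (k : ℝ) + 1 + 1 / 2 = k + 1 / 2 + 1 by ring, Gamma_add_one (by positivity)]
    have hΓ₃ : Gamma (k + 1 + lam + 1 / 2) = (k + lam + 1 / 2) * Gamma (k + lam + 1 / 2) := by
      rw [show (k : ℝ) + 1 + lam + 1 / 2 = k + lam + 1 / 2 + 1 by ring,
        Gamma_add_one (by positivity)]
    have hΓ₄ := (Gamma_pos_of_pos (by positivity : 0 < (k : ℝ) + lam + 1 / 2)).ne'
    have hrec := gegenbauerIntegral_add_two hlam (2 * k)
    rw [ih] at hrec
    rw [show 2 * (k + 1) = 2 * k + 2 by ring]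
    push_cast at hrec ⊢
    rw [hΓ₂, hΓ₃]
    refine mul_left_cancel₀ (by positivity : ((2 * k : ℝ) + 1 + 2 * lam) * (2 * k + 2) ≠ 0) ?_
    rw [hrec]
    field_simp
    linear_combination (-(2 * k + 1 + 2 * lam) / 2 : ℝ) * hC

theorem integral_cot_arccos_half_mul_gegenbauer {n : ℕ} (hn : Even n) :
    ∫ x in (-1 : ℝ)..1, cot (arccos x / 2) * gegenbauer lam n x * (1 - x ^ 2) ^ (lam - 1 / 2) =
      gegenbauerIntegral lam n := by
  have hw : 0 ≤ lam - 1 := by linarith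
  have hodd : ∫ x in (-1 : ℝ)..1, x * gegenbauer lam n x * (1 - x ^ 2) ^ (lam - 1) = 0 :=
    integral_eq_zero_of_odd (fun x => by simp [gegenbauer_neg, hn.neg_one_pow]) 1
  rw [intervalIntegral.integral_congr_Ioo_of_le (by norm_num) fun x hx => by
    rw [mul_right_comm, cot_arccos_half_mul_rpow lam hx]]
  calc ∫ x in (-1 : ℝ)..1, (1 + x) * (1 - x ^ 2) ^ (lam - 1) * gegenbauer lam n x
      = gegenbauerIntegral lam n
          + ∫ x in (-1 : ℝ)..1, x * gegenbauer lam n x * (1 - x ^ 2) ^ (lam - 1) := by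
        rw [gegenbauerIntegral, ← intervalIntegral.integral_add
          (intervalIntegrable_mul_one_sub_sq_rpow (by fun_prop) hw _ _)
          (intervalIntegrable_mul_one_sub_sq_rpow (by fun_prop) hw _ _)]
        congr 1; ext x; ring
    _ = gegenbauerIntegral lam n := by rw [hodd, add_zero]

end GegenbauerIntegral

theorem sphereArea_div_sphereArea_sub_one {q : ℝ} (hq : 0 < q) :
    sphereArea q / sphereArea (q - 1) = √π * Gamma (q / 2) / Gamma ((q + 1) / 2) := by
  have hπ : π ^ ((q + 1) / 2) = π ^ (q / 2) * √π := by
    rw [sqrt_eq_rpow, ← rpow_add pi_pos]; ring_nf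
  have hΓ := (Gamma_pos_of_pos (by positivity : 0 < q / 2)).ne'
  rw [sphereArea, sphereArea, sub_add_cancel, hπ]
  field_simp

/-- Even-order Gegenbauer coefficients of the stereographic kernel cot. -/
theorem gegenbauer_coeff_cot_even (q : ℕ) (hq : 3 ≤ q) (k : ℕ) :
    (sphereArea (q : ℝ) / sphereArea ((q : ℝ) - 1) *
        (1 + 2 * ((2 * k : ℕ) : ℝ) / ((q : ℝ) - 1))⁻¹ *
        gegenbauer (((q : ℝ) - 1) / 2) (2 * k) 1)⁻¹ *
      ∫ x in (-1 : ℝ)..1,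
        Real.cot (Real.arccos x / 2) * gegenbauer (((q : ℝ) - 1) / 2) (2 * k) x *
          (1 - x ^ 2) ^ ((q : ℝ) / 2 - 1) =
    Real.Gamma ((k : ℝ) + 1 / 2) ^ 2 * Real.Gamma (((q : ℝ) - 1) / 2) ^ 2 /
        (2 * Real.pi * Real.Gamma ((k : ℝ) + (q : ℝ) / 2) ^ 2) *
      (4 * (k : ℝ) + (q : ℝ) - 1) := by
  have hq' : (3 : ℝ) ≤ q := by exact_mod_cast hq
  generalize (q : ℝ) = Q at hq' ⊢
  obtain ⟨lam, rfl⟩ : ∃ lam : ℝ, Q = 2 * lam + 1 := ⟨(Q - 1) / 2, by ring⟩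
  have hlam : 1 ≤ lam := by linarith
  rw [show (2 * lam + 1 - 1) / 2 = lam by ring, show (2 * lam + 1) / 2 - 1 = lam - 1 / 2 by ring,
    integral_cot_arccos_half_mul_gegenbauer hlam (even_two_mul k), gegenbauerIntegral_two_mul hlam,
    sphereArea_div_sphereArea_sub_one (by positivity)]
  rw [show (2 * lam + 1 + 1) / 2 = lam + 1 by ring, Gamma_add_one (by positivity),
    show (k : ℝ) + (2 * lam + 1) / 2 = k + lam + 1 / 2 by ring,
    show (2 * lam + 1) / 2 = lam + 1 / 2 by ring]
  have hC := gegenbauer_one_pos (by positivity : 0 < lam) (2 * k)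
  have hΓ₁ := (Gamma_pos_of_pos (by positivity : 0 < lam)).ne'
  have hΓ₂ := (Gamma_pos_of_pos (by positivity : 0 < lam + 1 / 2)).ne'
  have hΓ₃ := (Gamma_pos_of_pos (by positivity : 0 < (k : ℝ) + lam + 1 / 2)).ne'
  push_cast
  field_simp
  rw [sq_sqrt pi_pos.le]
  ring
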